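/- For partitions λ and μ with at most d parts, define TW(λ,μ) = det(A·B), where A is the d×∞ matrix with entries A_{i,k} = h̃_{i−k+μ_{d−i+1}} and B is the ∞×d matrix with entries B_{k,j} = h_{j−k+λ_{d−j+1}} (indices k ≥ 1; h_m = h̃_m = 0 for m < 0, so the product is well-defined). Then by the Cauchy–Binet formula, TW(λ,μ) = Σ_ν s_{λ/ν}(X) s̃_{μ/ν}(Y), the sum over all partitions ν with at most d parts. -/

import Mathlib

open Finset MvPolynomial

open scoped Classical

noncomputable section

/-- The ring of symmetric functions over `ℚ`, presented via the power sums
`p 1, p 2, …` as free commutative generators (variable `i` corresponds to `p (i+1)`). -/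
abbrev SymF : Type := MvPolynomial ℕ ℚ

/-- The ring of symmetric functions in two independent countable variable sets `X`, `Y`. -/
abbrev SymF2 : Type := MvPolynomial (ℕ ⊕ ℕ) ℚ

/-- The power sum `p k` (for `k ≥ 1`). -/
def P (k : ℕ) : SymF := X (k - 1)

/-- The power sum `p k (X)` in the first variable set. -/
def PX (k : ℕ) : SymF2 := X (Sum.inl (k - 1))

/-- The power sum `p̃ k (Y)` in the second variable set. -/
def PY (k : ℕ) : SymF2 := X (Sum.inr (k - 1))

/-- `z λ = ∏ i, i ^ m_i(λ) * m_i(λ)!`, where `m_i(λ)` is the number of parts of `λ` equal to `i`. -/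
def zPart {n : ℕ} (μ : n.Partition) : ℚ :=
  (μ.parts.map fun i => (i : ℚ)).prod *
    ∏ i ∈ μ.parts.toFinset, (Nat.factorial (μ.parts.count i) : ℚ)

/-- `p_μ = ∏ i p_{μ_i}`, generically: given the values `pv k` of the power sums. -/
def pPart {A : Type} [CommRing A] (pv : ℕ → A) {n : ℕ} (μ : n.Partition) : A :=
  (μ.parts.map pv).prod

/-- The complete homogeneous symmetric function `h_n = ∑_{μ ⊢ n} z_μ⁻¹ p_μ`, generically. -/
def hFun {A : Type} [CommRing A] [Algebra ℚ A] (pv : ℕ → A) (n : ℕ) : A :=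
  ∑ μ : n.Partition, (zPart μ)⁻¹ • pPart pv μ

/-- `h_m` for an integer index, with `h_m = 0` for `m < 0`. -/
def hInt {A : Type} [CommRing A] [Algebra ℚ A] (pv : ℕ → A) (m : ℤ) : A :=
  if m < 0 then 0 else hFun pv m.toNat

/-- The `i`-th largest part (1-indexed) of a partition; `0` if `i` exceeds the length. -/
def nthPart {n : ℕ} (μ : n.Partition) (i : ℕ) : ℕ :=
  ((μ.parts.sort (· ≤ ·)).reverse).getD (i - 1) 0

/-- The Schur function `s_λ`, via the Jacobi–Trudi determinant
`det (h_{λ_i - i + j})`, given the values `hv` of the complete homogeneous functions. -/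
def schurJT {A : Type} [CommRing A] (hv : ℤ → A) {n : ℕ} (lam : n.Partition) : A :=
  Matrix.det (Matrix.of fun i j : Fin lam.parts.card =>
    hv ((nthPart lam ((i : ℕ) + 1) : ℤ) - ((i : ℕ) + 1) + ((j : ℕ) + 1)))

/-- The skew Schur function `s_{λ/ν}`, via the Jacobi–Trudi determinant
`det (h_{λ_i - ν_j - i + j})_{d × d}` (valid whenever `d ≥ max (l(λ), l(ν))`). -/
def skewJT {A : Type} [CommRing A] (hv : ℤ → A) {n m : ℕ}
    (lam : n.Partition) (nu : m.Partition) (d : ℕ) : A :=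
  Matrix.det (Matrix.of fun i j : Fin d =>
    hv ((nthPart lam ((i : ℕ) + 1) : ℤ) - nthPart nu ((j : ℕ) + 1)
      - ((i : ℕ) + 1) + ((j : ℕ) + 1)))

/-- The Schur function `s_λ` in the ring of symmetric functions. -/
def schurF {n : ℕ} (lam : n.Partition) : SymF := schurJT (hInt P) lam

/-- The Schur function `s_λ(X)` in the first variable set. -/
def sX {n : ℕ} (lam : n.Partition) : SymF2 := schurJT (hInt PX) lam

/-- The Schur function `s_μ(Y)` in the second variable set. -/
def sY {n : ℕ} (lam : n.Partition) : SymF2 := schurJT (hInt PY) lam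

/-- `B` is the Hall inner product: the bilinear form making the Schur functions orthonormal. -/
def IsHall (B : SymF →ₗ[ℚ] SymF →ₗ[ℚ] ℚ) : Prop :=
  ∀ {n m : ℕ} (lam : n.Partition) (mu : m.Partition),
    B (schurF lam) (schurF mu) =
      if (⟨n, lam⟩ : Σ k : ℕ, k.Partition) = ⟨m, mu⟩ then 1 else 0

/-- `B` is the Hall inner product on `Λ(X) ⊗ Λ(Y)`: the bilinear form making the
products of Schur functions `s_λ(X) s_μ(Y)` orthonormal. -/
def IsHall2 (B : SymF2 →ₗ[ℚ] SymF2 →ₗ[ℚ] ℚ) : Prop :=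
  ∀ {n m n' m' : ℕ} (a : n.Partition) (b : m.Partition) (c : n'.Partition) (e : m'.Partition),
    B (sX a * sY b) (sX c * sY e) =
      if (⟨n, a⟩ : Σ k : ℕ, k.Partition) = ⟨n', c⟩ ∧
         (⟨m, b⟩ : Σ k : ℕ, k.Partition) = ⟨m', e⟩ then 1 else 0


/-- The Tracy–Widom matrix: the `d × d` product `A · B` of the half-strip matrices
`A = (h̃_{i-k+μ_{d-i+1}})_{d × ∞}` and `B = (h_{j-k+λ_{d-j+1}})_{∞ × d}`; the inner sum over
`k ≥ 1` is truncated at `d + n + m`, beyond which all terms vanish. -/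
def TWmat {n m : ℕ} (lam : n.Partition) (mu : m.Partition) (d : ℕ) :
    Matrix (Fin d) (Fin d) SymF2 :=
  Matrix.of fun i j => ∑ k ∈ Icc 1 (d + n + m),
    hInt PY (((i : ℕ) : ℤ) + 1 - (k : ℤ) + nthPart mu (d - (i : ℕ))) *
    hInt PX (((j : ℕ) : ℤ) + 1 - (k : ℤ) + nthPart lam (d - (j : ℕ)))

/-!
Write `TWmat` as `A * Bᵀ` for the `d × N` strips `A = (h̃_{i-k+μ_{d-i}})` and
`B = (h_{j-k+λ_{d-j}})` (rows and columns indexed from `0`, `N = d + n + m`) and expand the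
determinant by Cauchy–Binet over the column choices `k_0 < ⋯ < k_{d-1}`. Each of them is
`k_j = ν_{d-j} + j` for a unique partition `ν` with at most `d` parts, and after reversing rows
and columns the two `d × d` minors are the Jacobi–Trudi determinants of `s̃_{μ/ν}` and `s_{λ/ν}`.
The minor of `s_{λ/ν}` vanishes when `|ν| > |λ|`: then `ν_t > λ_t` for some `t`, and the entries
`h_{λ_i - ν_j - i + j}` with `j ≤ t ≤ i` have negative index.
-/

namespace List

theorem getD_filter_ne_zero {l : List ℕ} (hl : l.Pairwise (· ≥ ·)) (i : ℕ) :
    (l.filter (· ≠ 0)).getD i 0 = l.getD i 0 := by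
  induction l generalizing i with
  | nil => rfl
  | cons x l ih =>
    rw [pairwise_cons] at hl
    rcases Nat.eq_zero_or_pos x with rfl | hx
    · have hzero : ∀ y ∈ (0 :: l), y = 0 := by
        simpa using fun y hy => Nat.le_zero.mp (hl.1 y hy)
      rw [filter_eq_nil_iff.mpr (by simpa using hzero), eq_replicate_iff.mpr ⟨rfl, hzero⟩]
      simp only [getD_eq_getElem?_getD, getElem?_replicate, getElem?_nil, Option.getD_none]
      split <;> rfl
    · cases i
      · simp [filter_cons_of_pos, hx.ne']
      · rw [filter_cons_of_pos (by simpa using hx.ne'), getD_cons_succ, getD_cons_succ, ih hl.2]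

theorem getD_le_getD_of_le {l : List ℕ} (hl : l.Pairwise (· ≥ ·)) {i j : ℕ} (hij : i ≤ j) :
    l.getD j 0 ≤ l.getD i 0 := by
  rcases lt_or_ge j l.length with hj | hj
  · rw [getD_eq_getElem _ _ hj, getD_eq_getElem _ _ (hij.trans_lt hj)]
    rcases hij.eq_or_lt with rfl | hlt
    · rfl
    · exact pairwise_iff_getElem.mp hl _ _ _ _ hlt
  · rw [getD_eq_default _ _ hj]
    exact Nat.zero_le _

theorem eq_of_getD_eq {l₁ l₂ : List ℕ} (h₁ : 0 ∉ l₁) (h₂ : 0 ∉ l₂)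
    (h : ∀ i, l₁.getD i 0 = l₂.getD i 0) : l₁ = l₂ := by
  refine ext_getElem? fun i => ?_
  have hi := h i
  simp only [getD_eq_getElem?_getD] at hi
  cases e₁ : l₁[i]? <;> cases e₂ : l₂[i]? <;>
    simp only [e₁, e₂, Option.getD_none, Option.getD_some] at hi
  · rfl
  · exact absurd (hi ▸ mem_of_getElem? e₂) h₂
  · exact absurd (hi ▸ mem_of_getElem? e₁) h₁
  · rw [hi]

theorem reverse_sort_coe {l : List ℕ} (hl : l.Pairwise (· ≥ ·)) :
    ((l : Multiset ℕ).sort (· ≤ ·)).reverse = l := by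
  rw [← Multiset.coe_reverse, Multiset.coe_sort, mergeSort_eq_self _ (pairwise_reverse.mpr hl),
    reverse_reverse]

end List

theorem nthPart_antitone {n : ℕ} (ν : n.Partition) : Antitone (nthPart ν) := by
  intro a b hab
  exact List.getD_le_getD_of_le (List.pairwise_reverse.mpr (Multiset.pairwise_sort _ _))
    (Nat.sub_le_sub_right hab 1)

theorem nthPart_le {n : ℕ} (ν : n.Partition) (i : ℕ) : nthPart ν i ≤ n := by
  unfold nthPart
  rcases lt_or_ge (i - 1) (ν.parts.sort (· ≤ ·)).reverse.length with h | h
  · rw [List.getD_eq_getElem _ _ h]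
    have hmem := List.getElem_mem h
    rw [List.mem_reverse, Multiset.mem_sort] at hmem
    exact Nat.Partition.le_of_mem_parts hmem
  · rw [List.getD_eq_default _ _ h]; exact Nat.zero_le _

theorem nthPart_succ_eq_zero {n : ℕ} (ν : n.Partition) {i : ℕ} (hi : ν.parts.card ≤ i) :
    nthPart ν (i + 1) = 0 :=
  List.getD_eq_default _ _ (by simpa using hi)

theorem sigma_eq_of_nthPart_eq {x y : Σ j : ℕ, j.Partition}
    (h : ∀ i, nthPart x.2 (i + 1) = nthPart y.2 (i + 1)) : x = y := by
  obtain ⟨n, ν⟩ := x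
  obtain ⟨n', ν'⟩ := y
  have hne : ∀ {j : ℕ} (κ : j.Partition), 0 ∉ (κ.parts.sort (· ≤ ·)).reverse := fun κ hκ =>
    (κ.parts_pos (by simpa using hκ)).ne rfl
  have hparts : ν.parts = ν'.parts := by
    rw [← Multiset.sort_eq ν.parts (· ≤ ·), ← Multiset.sort_eq ν'.parts (· ≤ ·),
      ← List.reverse_inj.mp (List.eq_of_getD_eq (hne ν) (hne ν') (by simpa [nthPart] using h))]
  obtain ⟨p, hp, rfl⟩ := ν
  obtain ⟨p', hp', rfl⟩ := ν'
  subst hparts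
  rfl

def partitionOfFn {d : ℕ} (w : Fin d → ℕ) : Σ j : ℕ, j.Partition :=
  ⟨_, Nat.Partition.ofSums _ (List.ofFn w) rfl⟩

theorem card_parts_partitionOfFn_le {d : ℕ} (w : Fin d → ℕ) :
    (partitionOfFn w).2.parts.card ≤ d := by
  simp only [partitionOfFn, Nat.Partition.ofSums_parts]
  exact (Multiset.card_le_card (Multiset.filter_le _ _)).trans (by simp)

theorem nthPart_partitionOfFn {d : ℕ} {w : Fin d → ℕ} (hw : Antitone w) (i : ℕ) :
    nthPart (partitionOfFn w).2 (i + 1) = (List.ofFn w).getD i 0 := by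
  have hl : (List.ofFn w).Pairwise (· ≥ ·) := List.pairwise_ofFn.mpr fun _ _ h => hw h.le
  simp only [nthPart, partitionOfFn, Nat.Partition.ofSums_parts, Multiset.filter_coe,
    List.reverse_sort_coe (hl.filter _), Nat.add_sub_cancel, List.getD_filter_ne_zero hl]

theorem partitionOfFn_nthPart {n d : ℕ} (ν : n.Partition) (hν : ν.parts.card ≤ d) :
    partitionOfFn (fun i : Fin d => nthPart ν (i + 1)) = ⟨n, ν⟩ := by
  refine sigma_eq_of_nthPart_eq fun i => ?_
  rw [nthPart_partitionOfFn (fun a b h => nthPart_antitone ν (by simpa using h))]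
  rcases lt_or_ge i d with hi | hi
  · simp [hi]
  · rw [List.getD_eq_default _ _ (by simpa using hi), nthPart_succ_eq_zero ν (hν.trans hi)]

theorem sum_nthPart {n d : ℕ} (ν : n.Partition) (hν : ν.parts.card ≤ d) :
    ∑ i : Fin d, nthPart ν (i + 1) = n := by
  simpa [partitionOfFn, List.sum_ofFn] using congrArg Sigma.fst (partitionOfFn_nthPart ν hν)

theorem Finset.sum_injective_eq_sum_strictMono_perm {ι M : Type*} [Fintype ι] [LinearOrder ι]
    [AddCommMonoid M] {d : ℕ} (g : (Fin d → ι) → M) :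
    ∑ p : Fin d → ι with Function.Injective p, g p =
      ∑ f : Fin d → ι with StrictMono f, ∑ σ : Equiv.Perm (Fin d), g (f ∘ σ) := by
  rw [← sum_product' (f := fun f (σ : Equiv.Perm (Fin d)) => g (f ∘ σ))]
  symm
  refine sum_nbij' (fun q => q.1 ∘ q.2) (fun p => (p ∘ Tuple.sort p, (Tuple.sort p)⁻¹))
    ?_ ?_ ?_ ?_ fun _ _ => rfl
  · rintro ⟨f, σ⟩ h
    simp only [mem_product, mem_filter, mem_univ, true_and, and_true] at h ⊢
    exact h.injective.comp σ.injective
  · intro p hp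
    simp only [mem_product, mem_filter, mem_univ, true_and, and_true] at hp ⊢
    exact (Tuple.monotone_sort p).strictMono_of_injective (hp.comp (Tuple.sort p).injective)
  · rintro ⟨f, σ⟩ h
    simp only [mem_product, mem_filter, mem_univ, true_and, and_true] at h
    set τ := Tuple.sort (f ∘ σ)
    have hmono : StrictMono (f ∘ (σ * τ)) :=
      (Tuple.monotone_sort (f ∘ σ)).strictMono_of_injective
        (h.injective.comp (σ * τ).injective)
    have hf : f ∘ (σ * τ) = f := (hmono.range_inj h).mp (by simp [Set.range_comp])
    have hστ : σ * τ = 1 := Equiv.ext fun i => h.injective (congrFun hf i)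
    simp only [Prod.mk.injEq]
    exact ⟨hf, (eq_inv_of_mul_eq_one_left hστ).symm⟩
  · intro p _
    ext i
    simp

namespace Matrix

variable {R : Type*} [CommRing R]

theorem det_mul_eq_sum_prod_mul_det_submatrix {d : ℕ} {ι : Type*} [Fintype ι]
    (A : Matrix (Fin d) ι R) (B : Matrix ι (Fin d) R) :
    (A * B).det = ∑ p : Fin d → ι, (∏ i, A i (p i)) * (B.submatrix p id).det := by
  have hrows : A * B = fun i => ∑ k, A i k • B k := by
    ext i j; simp [mul_apply]
  rw [hrows]
  change detRowAlternating.toMultilinearMap _ = _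
  rw [MultilinearMap.map_sum]
  simp only [MultilinearMap.map_smul_univ, smul_eq_mul]
  rfl

/-- The Cauchy–Binet formula. -/
theorem det_mul_eq_sum_strictMono {d : ℕ} {ι : Type*} [Fintype ι] [LinearOrder ι]
    (A : Matrix (Fin d) ι R) (B : Matrix ι (Fin d) R) :
    (A * B).det = ∑ f : Fin d → ι with StrictMono f,
      (A.submatrix id f).det * (B.submatrix f id).det := by
  rw [det_mul_eq_sum_prod_mul_det_submatrix, ← sum_filter_add_sum_filter_not _ Function.Injective,
    sum_eq_zero (s := filter (fun p => ¬ Function.Injective p) _), add_zero,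
    sum_injective_eq_sum_strictMono_perm]
  · refine sum_congr rfl fun f _ => ?_
    have hperm : ∀ σ : Equiv.Perm (Fin d),
        B.submatrix (f ∘ σ) id = (B.submatrix f id).submatrix σ id := fun _ => rfl
    simp only [hperm, det_permute, ← mul_assoc, ← sum_mul]
    congr 1
    rw [← det_transpose, det_apply]
    simp [mul_comm, Units.smul_def]
  · intro p hp
    obtain ⟨i, j, hij, hne⟩ : ∃ i j, p i = p j ∧ i ≠ j := by
      simpa [Function.Injective] using (mem_filter.mp hp).2
    rw [det_zero_of_row_eq hne (by ext k; simp [hij]), mul_zero]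

theorem det_eq_zero_of_forall_le_le {d : ℕ}
    (M : Matrix (Fin d) (Fin d) R) (t : Fin d) (h : ∀ i j, j ≤ t → t ≤ i → M i j = 0) :
    M.det = 0 := by
  rw [Matrix.det_apply']
  refine sum_eq_zero fun σ _ => ?_
  obtain ⟨c, hct, htc⟩ : ∃ c ≤ t, t ≤ σ c := by
    by_contra! hc
    have := card_le_card_of_injOn σ (s := Iic t) (t := Iio t)
      (fun c hc' => mem_Iio.mpr (hc c (mem_Iic.mp hc'))) σ.injective.injOn
    simp at this
  exact mul_eq_zero_of_right _ (prod_eq_zero (mem_univ c) (h _ _ hct htc))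

end Matrix

theorem Fin.sub_le_sub_of_strictMono {d : ℕ} {f : Fin d → ℕ} (hf : StrictMono f) (a b : Fin d) :
    (b : ℕ) - a ≤ f b - f a := by
  have hcard := card_le_card_of_injOn f (s := Ico a b) (t := Ico (f a) (f b))
    (fun x hx => by
      rw [coe_Ico, Set.mem_Ico] at hx
      exact mem_Ico.mpr ⟨hf.monotone hx.1, hf hx.2⟩)
    hf.injective.injOn
  simpa [Fin.card_Ico] using hcard

/-- The partition `ν` of a column choice `f`, determined by `f k = ν_{d-k} + k`. -/
def shiftedPartition {d N : ℕ} (f : Fin d → Fin N) : Σ j : ℕ, j.Partition :=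
  partitionOfFn fun i => (f i.rev : ℕ) - i.rev

theorem nthPart_shiftedPartition {d N : ℕ} {f : Fin d → Fin N} (hf : StrictMono f) (k : Fin d) :
    nthPart (shiftedPartition f).2 (d - k) + k = f k := by
  have hf' : StrictMono fun i => (f i : ℕ) := Fin.val_strictMono.comp hf
  have hanti : Antitone fun i : Fin d => (f i.rev : ℕ) - i.rev := fun a b hab => by
    show (f b.rev : ℕ) - b.rev ≤ (f a.rev : ℕ) - a.rev
    have hrev : b.rev ≤ a.rev := Fin.rev_le_rev.mpr hab
    have := Fin.sub_le_sub_of_strictMono hf' b.rev a.rev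
    have := hf'.monotone hrev
    omega
  have hk : (k : ℕ) ≤ f k :=
    (Fin.sub_le_sub_of_strictMono hf' ⟨0, k.pos⟩ k).trans (Nat.sub_le _ _)
  have hd : d - k = k.rev + 1 := by rw [Fin.val_rev]; omega
  rw [hd, shiftedPartition, nthPart_partitionOfFn hanti,
    List.getD_eq_getElem _ _ (by simpa using k.rev.isLt), List.getElem_ofFn]
  simp only [Fin.eta, Fin.rev_rev]
  omega

theorem shiftedPartition_eq {d N : ℕ} {f : Fin d → Fin N} {x : Σ j : ℕ, j.Partition}
    (hx : x.2.parts.card ≤ d) (hf : ∀ k : Fin d, nthPart x.2 (d - k) + k = f k) :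
    shiftedPartition f = x := by
  refine (congrArg partitionOfFn ?_).trans (partitionOfFn_nthPart x.2 hx)
  ext i
  have hi := i.isLt
  rw [← hf i.rev, Fin.val_rev, show d - (d - (i + 1)) = i + 1 by omega]
  omega

theorem sum_shiftedPartition_eq_sum_sigma {M : Type*} [AddCommMonoid M] {d N K : ℕ}
    (hK : K + d ≤ N) (g : (Σ j : ℕ, j.Partition) → M) :
    ∑ f ∈ ({f : Fin d → Fin N | StrictMono f} : Finset _).filter
        (fun f => (shiftedPartition f).1 ≤ K), g (shiftedPartition f) =
      ∑ x ∈ (range (K + 1)).sigma fun j => (univ : Finset j.Partition).filter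
        (fun ν => ν.parts.card ≤ d), g x := by
  have hmem : ∀ x : Σ j : ℕ, j.Partition, x ∈ (range (K + 1)).sigma (fun j =>
      (univ : Finset j.Partition).filter (fun ν => ν.parts.card ≤ d)) ↔
      x.1 ≤ K ∧ x.2.parts.card ≤ d := fun x => by
    simp
  refine sum_bij' (fun f _ => shiftedPartition f)
    (fun x hx k => ⟨nthPart x.2 (d - k) + k, by
      have := nthPart_le x.2 (d - k)
      have := ((hmem x).mp hx).1
      omega⟩) ?_ ?_ ?_ ?_ fun _ _ => rfl
  · intro f hf
    simp only [mem_filter, mem_univ, true_and] at hf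
    exact (hmem _).mpr ⟨hf.2, card_parts_partitionOfFn_le _⟩
  · intro x hx
    have hx' := (hmem x).mp hx
    simp only [mem_filter, mem_univ, true_and]
    refine ⟨fun a b hab => ?_, ?_⟩
    · rw [Fin.lt_def] at hab ⊢
      have := nthPart_antitone x.2 (show d - b ≤ d - a by omega)
      dsimp only
      omega
    · rw [shiftedPartition_eq hx'.2 fun k => rfl]
      exact hx'.1
  · intro f hf
    simp only [mem_filter, mem_univ, true_and] at hf
    ext k
    exact nthPart_shiftedPartition hf.1 k
  · intro x hx
    exact shiftedPartition_eq ((hmem x).mp hx).2 fun k => rfl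

theorem skewJT_eq_zero_of_lt {A : Type} [CommRing A] {hv : ℤ → A}
    (hv0 : ∀ z < 0, hv z = 0) {n j d : ℕ} {lam : n.Partition} {ν : j.Partition}
    (hl : lam.parts.card ≤ d) (hν : ν.parts.card ≤ d) (hlt : n < j) :
    skewJT hv lam ν d = 0 := by
  obtain ⟨t, ht⟩ : ∃ t : Fin d, nthPart lam (t + 1) < nthPart ν (t + 1) := by
    by_contra! h
    have := sum_le_sum fun i (_ : i ∈ univ) => h i
    rw [sum_nthPart ν hν, sum_nthPart lam hl] at this
    omega
  refine Matrix.det_eq_zero_of_forall_le_le _ t fun i k hkt hti => hv0 _ ?_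
  rw [Fin.le_def] at hkt hti
  have := nthPart_antitone lam (show (t : ℕ) + 1 ≤ i + 1 by omega)
  have := nthPart_antitone ν (show (k : ℕ) + 1 ≤ t + 1 by omega)
  omega

/-- The matrix `(h_{i-k+λ_{d-i}})` of the statement, truncated to `N` columns and indexed from `0`.
-/
def hStrip {A : Type} (hv : ℤ → A) {n : ℕ} (lam : n.Partition) (d N : ℕ) :
    Matrix (Fin d) (Fin N) A :=
  Matrix.of fun i k => hv ((i : ℤ) - k + nthPart lam (d - i))

theorem TWmat_eq_mul {n m : ℕ} (lam : n.Partition) (mu : m.Partition) (d : ℕ) :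
    TWmat lam mu d =
      hStrip (hInt PY) mu d (d + n + m) * (hStrip (hInt PX) lam d (d + n + m)).transpose := by
  refine Matrix.ext fun i j => ?_
  simp only [TWmat, Matrix.of_apply, Matrix.mul_apply]
  rw [← Ico_add_one_right_eq_Icc (α := ℕ), sum_Ico_eq_sum_range, Nat.add_sub_cancel,
    ← Fin.sum_univ_eq_sum_range]
  refine sum_congr rfl fun k _ => ?_
  simp only [hStrip, Matrix.of_apply, Matrix.transpose_apply]
  congr 2 <;> push_cast <;> ring

theorem det_hStrip_submatrix {A : Type} [CommRing A] (hv : ℤ → A) {n j d N : ℕ}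
    (lam : n.Partition) (ν : j.Partition) {f : Fin d → Fin N}
    (hf : ∀ k : Fin d, nthPart ν (d - k) + k = f k) :
    ((hStrip hv lam d N).submatrix id f).det = skewJT hv lam ν d := by
  rw [skewJT, ← Matrix.det_submatrix_equiv_self Fin.revPerm]
  congr 1
  ext i k
  simp only [hStrip, Matrix.submatrix_apply, Matrix.of_apply, id, ← hf, Fin.revPerm_apply,
    Fin.val_rev]
  congr 1
  have := i.isLt
  have := k.isLt
  rw [Nat.sub_sub_self (show (i : ℕ) + 1 ≤ d by omega),
    Nat.sub_sub_self (show (k : ℕ) + 1 ≤ d by omega)]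
  omega

/-- Cauchy–Binet for the Tracy–Widom determinant:
`TW(λ,μ) = ∑_ν s_{λ/ν}(X) s̃_{μ/ν}(Y)`, summed over partitions `ν` with at most `d` parts
(only `ν ⊆ λ, μ` contribute, so the sum is truncated at `|ν| ≤ min(|λ|,|μ|)`). -/
theorem stmt_11 {n m : ℕ} (lam : n.Partition) (mu : m.Partition) (d : ℕ)
    (hl : lam.parts.card ≤ d) (hm : mu.parts.card ≤ d) :
    (TWmat lam mu d).det = ∑ j ∈ range (min n m + 1),
      ∑ ν ∈ (univ : Finset j.Partition).filter (fun ν => ν.parts.card ≤ d),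
        skewJT (hInt PX) lam ν d * skewJT (hInt PY) mu ν d := by
  set g : (Σ j : ℕ, j.Partition) → SymF2 :=
    fun x => skewJT (hInt PX) lam x.2 d * skewJT (hInt PY) mu x.2 d
  have hv0 : ∀ (pv : ℕ → SymF2) (z : ℤ), z < 0 → hInt pv z = 0 := fun _ _ hz => if_pos hz
  calc (TWmat lam mu d).det
      = ∑ f : Fin d → Fin (d + n + m) with StrictMono f, g (shiftedPartition f) := by
        rw [TWmat_eq_mul, Matrix.det_mul_eq_sum_strictMono]
        refine sum_congr rfl fun f hf => ?_
        have hsp := nthPart_shiftedPartition (mem_filter.mp hf).2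
        rw [mul_comm, ← Matrix.transpose_submatrix, Matrix.det_transpose,
          det_hStrip_submatrix _ _ _ hsp, det_hStrip_submatrix _ _ _ hsp]
    _ = ∑ f ∈ ({f : Fin d → Fin (d + n + m) | StrictMono f} : Finset _).filter
          (fun f => (shiftedPartition f).1 ≤ min n m), g (shiftedPartition f) := by
        refine (sum_filter_of_ne fun f _ hne => ?_).symm
        have hcard : (shiftedPartition f).2.parts.card ≤ d := card_parts_partitionOfFn_le _
        by_contra! hlt
        rcases min_lt_iff.mp hlt with hn | hm'
        · exact hne (mul_eq_zero_of_left (skewJT_eq_zero_of_lt (hv0 PX) hl hcard hn) _)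
        · exact hne (mul_eq_zero_of_right _ (skewJT_eq_zero_of_lt (hv0 PY) hm hcard hm'))
    _ = _ := by
        rw [sum_sigma']
        exact sum_shiftedPartition_eq_sum_sigma (by omega) g
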